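/- Let 0<q<1, α>0 and β>0. Then for every z∈ℝ with |z|·(1−q)^α < 1, the series ∑_{k=0}^∞ z^k/Γ_q(αk+β) defining the q-Mittag-Leffler function e_{α,β}(z;q) converges absolutely. -/

import Mathlib

open scoped BigOperators

/-- The infinite q-Pochhammer symbol `(a;q)_∞ = ∏_{j=0}^∞ (1 - q^j a)`. -/
noncomputable def qPochInf (q a : ℝ) : ℝ := ∏' j : ℕ, (1 - q ^ j * a)

/-- The q-gamma function `Γ_q(x) = ((q;q)_∞/(q^x;q)_∞)·(1-q)^{1-x}`. -/
noncomputable def qGamma (q x : ℝ) : ℝ :=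
  (qPochInf q q / qPochInf q (q ^ x)) * (1 - q) ^ (1 - x)

/-- The q-Mittag-Leffler function `e_{α,β}(z;q) = ∑_{k=0}^∞ z^k/Γ_q(αk+β)`. -/
noncomputable def qML (q α β z : ℝ) : ℝ := ∑' k : ℕ, z ^ k / qGamma q (α * k + β)

/-! For `0 < x` every factor of `(q^x;q)_∞` lies in `(0, 1]`, so `0 < (q^x;q)_∞ ≤ 1` and hence
`Γ_q(x) ≥ (q;q)_∞ (1-q)^{1-x}`. With `x = αk + β` this bounds the `k`-th term of the series by
`(1-q)^{β-1}/(q;q)_∞ · (|z| (1-q)^α)^k`, a convergent geometric series. -/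

open Real

section QPochhammer

variable {q a : ℝ}

lemma summable_log_one_sub_pow_mul (hq0 : 0 ≤ q) (hq1 : q < 1) (a : ℝ) :
    Summable fun n : ℕ => log (1 - q ^ n * a) := by
  simpa [sub_eq_add_neg] using
    Real.summable_log_one_add_of_summable ((summable_geometric_of_lt_one hq0 hq1).mul_right a).neg

lemma pow_mul_le_of_nonneg (hq0 : 0 ≤ q) (hq1 : q ≤ 1) (ha0 : 0 ≤ a) (n : ℕ) :
    q ^ n * a ≤ a :=
  mul_le_of_le_one_left ha0 (pow_le_one₀ hq0 hq1)

lemma qPochInf_eq_exp_tsum_log (hq0 : 0 ≤ q) (hq1 : q < 1) (ha0 : 0 ≤ a) (ha1 : a < 1) :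
    qPochInf q a = exp (∑' n : ℕ, log (1 - q ^ n * a)) :=
  (rexp_tsum_eq_tprod (fun n => by linarith [pow_mul_le_of_nonneg hq0 hq1.le ha0 n])
    (summable_log_one_sub_pow_mul hq0 hq1 a)).symm

lemma qPochInf_pos (hq0 : 0 ≤ q) (hq1 : q < 1) (ha0 : 0 ≤ a) (ha1 : a < 1) :
    0 < qPochInf q a := by
  rw [qPochInf_eq_exp_tsum_log hq0 hq1 ha0 ha1]
  exact exp_pos _

lemma qPochInf_le_one (hq0 : 0 ≤ q) (hq1 : q < 1) (ha0 : 0 ≤ a) (ha1 : a < 1) :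
    qPochInf q a ≤ 1 := by
  rw [qPochInf_eq_exp_tsum_log hq0 hq1 ha0 ha1, exp_le_one_iff]
  refine tsum_nonpos fun n => log_nonpos ?_ ?_
  · linarith [pow_mul_le_of_nonneg hq0 hq1.le ha0 n]
  · linarith [mul_nonneg (pow_nonneg hq0 n) ha0]

end QPochhammer

section QGamma

variable {q x : ℝ}

lemma qPochInf_rpow_pos (hq0 : 0 < q) (hq1 : q < 1) (hx : 0 < x) : 0 < qPochInf q (q ^ x) :=
  qPochInf_pos hq0.le hq1 (rpow_nonneg hq0.le x) (rpow_lt_one hq0.le hq1 hx)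

lemma qGamma_pos (hq0 : 0 < q) (hq1 : q < 1) (hx : 0 < x) : 0 < qGamma q x := by
  have := qPochInf_pos hq0.le hq1 hq0.le hq1
  have := qPochInf_rpow_pos hq0 hq1 hx
  have := rpow_pos_of_pos (sub_pos.mpr hq1) (1 - x)
  unfold qGamma
  positivity

lemma qPochInf_mul_rpow_le_qGamma (hq0 : 0 < q) (hq1 : q < 1) (hx : 0 < x) :
    qPochInf q q * (1 - q) ^ (1 - x) ≤ qGamma q x := by
  have hqq := qPochInf_pos hq0.le hq1 hq0.le hq1
  have hqx := qPochInf_rpow_pos hq0 hq1 hx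
  have hqx1 := qPochInf_le_one hq0.le hq1 (rpow_nonneg hq0.le x) (rpow_lt_one hq0.le hq1 hx)
  refine mul_le_mul_of_nonneg_right ?_ (rpow_nonneg (sub_pos.mpr hq1).le _)
  exact (le_div_iff₀ hqx).mpr (mul_le_of_le_one_right hqq.le hqx1)

lemma inv_qGamma_le (hq0 : 0 < q) (hq1 : q < 1) (hx : 0 < x) :
    (qGamma q x)⁻¹ ≤ (1 - q) ^ (x - 1) / qPochInf q q := by
  have hq' : 0 < 1 - q := sub_pos.mpr hq1
  have hlow : 0 < qPochInf q q * (1 - q) ^ (1 - x) :=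
    mul_pos (qPochInf_pos hq0.le hq1 hq0.le hq1) (rpow_pos_of_pos hq' _)
  calc (qGamma q x)⁻¹ ≤ (qPochInf q q * (1 - q) ^ (1 - x))⁻¹ :=
        inv_anti₀ hlow (qPochInf_mul_rpow_le_qGamma hq0 hq1 hx)
    _ = (1 - q) ^ (x - 1) / qPochInf q q := by
        rw [mul_inv, ← rpow_neg hq'.le, neg_sub, div_eq_mul_inv, mul_comm]

end QGamma

lemma abs_pow_div_qGamma_le {q α β : ℝ} (hq0 : 0 < q) (hq1 : q < 1) (hα : 0 ≤ α) (hβ : 0 < β)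
    (z : ℝ) (k : ℕ) :
    |z ^ k / qGamma q (α * k + β)| ≤
      (1 - q) ^ (β - 1) / qPochInf q q * (|z| * (1 - q) ^ α) ^ k := by
  have hq' : 0 < 1 - q := sub_pos.mpr hq1
  have hx : 0 < α * k + β := by positivity
  have hsplit : (1 - q) ^ (α * k + β - 1) = ((1 - q) ^ α) ^ k * (1 - q) ^ (β - 1) := by
    rw [add_sub_assoc, rpow_add hq', rpow_mul hq'.le, rpow_natCast]
  calc |z ^ k / qGamma q (α * k + β)| = |z| ^ k * (qGamma q (α * k + β))⁻¹ := by
        rw [abs_div, abs_pow, abs_of_pos (qGamma_pos hq0 hq1 hx), div_eq_mul_inv]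
    _ ≤ |z| ^ k * ((1 - q) ^ (α * k + β - 1) / qPochInf q q) :=
        mul_le_mul_of_nonneg_left (inv_qGamma_le hq0 hq1 hx) (by positivity)
    _ = (1 - q) ^ (β - 1) / qPochInf q q * (|z| * (1 - q) ^ α) ^ k := by
        rw [hsplit, mul_pow]
        ring

theorem qML_summable (q α β : ℝ) (hq0 : 0 < q) (hq1 : q < 1)
    (hα : 0 < α) (hβ : 0 < β) :
    ∀ z : ℝ, |z| * (1 - q) ^ α < 1 →
      Summable (fun k : ℕ => |z ^ k / qGamma q (α * k + β)|) := by
  intro z hz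
  have hr0 : 0 ≤ |z| * (1 - q) ^ α := mul_nonneg (abs_nonneg z) (rpow_nonneg (by linarith) α)
  exact Summable.of_nonneg_of_le (fun k => abs_nonneg _)
    (abs_pow_div_qGamma_le hq0 hq1 hα.le hβ z)
    ((summable_geometric_of_lt_one hr0 hz).mul_left _)
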